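/- arXiv:2507.13990 — 2 statements merged into one kernel-verified Lean document; each statement's English description precedes it below -/
import Mathlib

section
/- Under Assumption A, if (u,ℓ) and (v,m) are both solutions of the free boundary problem (FBP), then for every t > 0, ∫_{ℝ^d} |u(x,t) − v(x,t)| dx ≤ 2 ∫_{F⁻¹((ℓ_t ∨ m_t, ∞))} |u(x,t) − v(x,t)| dx, where ℓ_t ∨ m_t = max(ℓ_t, m_t). -/
open MeasureTheory Set Filter Topology

noncomputable section

/-- Points of `ℝ^d`. -/
abbrev Vec (d : ℕ) := EuclideanSpace ℝ (Fin d)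

/-- Assumption A on the fitness function `F`, the branching density `ρ`,
the initial density `u₀` and the initial boundary value `lam₀`. -/
structure AssumptionA (d : ℕ) (F : Vec d → ℝ) (ρ : Vec d → Vec d → ℝ)
    (u₀ : Vec d → ℝ) (lam₀ : ℝ) : Prop where
  F_cont : Continuous F
  F_unbdd_below : ∀ c : ℝ, ∃ x, F x < c
  F_unbdd_above : ∀ c : ℝ, ∃ x, c < F x
  F_level_null : ∀ a : ℝ, volume (F ⁻¹' {a}) = 0
  ρ_meas : Measurable (Function.uncurry ρ)
  ρ_nonneg : ∀ x y, 0 ≤ ρ x y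
  ρ_int : ∀ x, Integrable (ρ x)
  ρ_prob : ∀ x, ∫ y, ρ x y = 1
  ρ_dom : ∃ (ρt : Vec d → ℝ) (c : ℝ), (∀ z, 0 ≤ ρt z) ∧ Integrable ρt ∧
    (∫ z, ρt z = 1) ∧ ∀ x y, ρ x y ≤ c * ρt (y - x)
  ρ_unif_cont : ∀ ε : ℝ, 0 < ε → ∃ δ : ℝ, 0 < δ ∧
    ∀ x y₁ y₂ : Vec d, dist y₁ y₂ < δ → |ρ x y₁ - ρ x y₂| < ε
  ρ_push_pos : ∀ a : ℝ, ∀ x : Vec d, a < F x → 0 < ∫ y in F ⁻¹' Ioi a, ρ x y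
  u₀_nonneg : ∀ x, 0 ≤ u₀ x
  u₀_bdd : ∃ C : ℝ, ∀ x, u₀ x ≤ C
  u₀_int : Integrable u₀
  u₀_prob : ∫ x, u₀ x = 1
  u₀_cont : ContinuousOn u₀ (F ⁻¹' Ioi lam₀)
  u₀_vanish : ∀ x, F x < lam₀ → u₀ x = 0
  u₀_charge : ∀ δ : ℝ, 0 < δ → ∀ l : ℝ, lam₀ ≤ l → 0 < ∫ x in F ⁻¹' Ioo l (l + δ), u₀ x

/-- `(u, ℓ)` is an admissible pair solving the free boundary problem (FBP):
`ℓ` is càdlàg, `u` is nonnegative, locally bounded in time, continuous in `x`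
and continuously differentiable in `t` on `{(x,t) : F x > ℓ t}`, and
(i) `∂ₜ u(x,t) = ∫ u(y,t) ρ(y,x) dy` for `F x > ℓ t`, `t > 0`;
(ii) `u(x,t) = 0` for `F x ≤ ℓ t`, `t > 0`;
(iii) `∫ u(x,t) dx = 1` for `t > 0`;
(iv) `u(·,0) = u₀`, `ℓ 0 = lam₀`. -/
structure IsFBPSolution (d : ℕ) (F : Vec d → ℝ) (ρ : Vec d → Vec d → ℝ)
    (u₀ : Vec d → ℝ) (lam₀ : ℝ) (u : Vec d → ℝ → ℝ) (ℓ : ℝ → ℝ) : Prop where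
  ℓ_rc : ∀ t : ℝ, 0 ≤ t → ContinuousWithinAt ℓ (Ici t) t
  ℓ_ll : ∀ t : ℝ, 0 < t → ∃ L : ℝ, Tendsto ℓ (𝓝[<] t) (𝓝 L)
  u_nonneg : ∀ x, ∀ t : ℝ, 0 ≤ t → 0 ≤ u x t
  u_bdd : ∀ T : ℝ, 0 < T → ∃ C : ℝ, ∀ x, ∀ t ∈ Icc (0:ℝ) T, u x t ≤ C
  u_meas : ∀ t : ℝ, 0 ≤ t → Measurable fun x => u x t
  u_cont_x : ∀ t : ℝ, 0 ≤ t → ContinuousOn (fun x => u x t) (F ⁻¹' Ioi (ℓ t))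
  pde : ∀ x, ∀ t : ℝ, 0 < t → ℓ t < F x →
    HasDerivAt (fun s => u x s) (∫ y, u y t * ρ y x) t
  pde_cont : ∀ x, ContinuousOn (fun t => ∫ y, u y t * ρ y x) {t : ℝ | 0 < t ∧ ℓ t < F x}
  vanish : ∀ x, ∀ t : ℝ, 0 < t → F x ≤ ℓ t → u x t = 0
  mass : ∀ t : ℝ, 0 < t → ∫ x, u x t = 1
  init_u : ∀ x, u x 0 = u₀ x
  init_ℓ : ℓ 0 = lam₀

/-! Off `F⁻¹((ℓ_t ∨ m_t, ∞))` one of the two densities vanishes and the other is nonnegative, so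
there `|u - v| = ±(u - v)`. Since `u - v` has total integral zero, its integral over that complement
is minus its integral over the set itself, which is at most the `L¹` norm there. -/

theorem integral_abs_le_two_mul_setIntegral_abs {α : Type*} [MeasurableSpace α] {μ : Measure α}
    {h : α → ℝ} {A : Set α} (hA : MeasurableSet A) (hh : Integrable h μ)
    (h_integral : ∫ x, h x ∂μ = 0) (h_nonneg : ∀ x ∉ A, 0 ≤ h x) :
    ∫ x, |h x| ∂μ ≤ 2 * ∫ x in A, |h x| ∂μ := by
  have hsplit := integral_add_compl hA hh
  have hsplit_abs := integral_add_compl hA hh.abs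
  have hcompl : ∫ x in Aᶜ, |h x| ∂μ = ∫ x in Aᶜ, h x ∂μ :=
    setIntegral_congr_fun hA.compl fun x hx => abs_of_nonneg (h_nonneg x hx)
  have hA_bound : -∫ x in A, h x ∂μ ≤ ∫ x in A, |h x| ∂μ :=
    neg_le.mp (neg_le_of_abs_le abs_integral_le_integral_abs)
  linarith

namespace IsFBPSolution

variable {d : ℕ} {F : Vec d → ℝ} {ρ : Vec d → Vec d → ℝ} {u₀ : Vec d → ℝ} {lam₀ : ℝ}
  {u v : Vec d → ℝ → ℝ} {ℓ m : ℝ → ℝ}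

theorem integrable (hu : IsFBPSolution d F ρ u₀ lam₀ u ℓ) {t : ℝ} (ht : 0 < t) :
    Integrable fun x => u x t :=
  Integrable.of_integral_ne_zero (by rw [hu.mass t ht]; exact one_ne_zero)

theorem integral_abs_sub_le_of_le (hF : Measurable F) (hu : IsFBPSolution d F ρ u₀ lam₀ u ℓ)
    (hv : IsFBPSolution d F ρ u₀ lam₀ v m) {t : ℝ} (ht : 0 < t) (hℓm : ℓ t ≤ m t) :
    ∫ x, |u x t - v x t| ≤ 2 * ∫ x in F ⁻¹' Ioi (max (ℓ t) (m t)), |u x t - v x t| := by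
  refine integral_abs_le_two_mul_setIntegral_abs (hF measurableSet_Ioi)
    ((hu.integrable ht).sub (hv.integrable ht)) ?_ fun x hx => ?_
  · rw [integral_sub (hu.integrable ht) (hv.integrable ht), hu.mass t ht, hv.mass t ht, sub_self]
  · rw [mem_preimage, mem_Ioi, not_lt, max_eq_right hℓm] at hx
    rw [hv.vanish x t ht hx, sub_zero]
    exact hu.u_nonneg x t ht.le

end IsFBPSolution

/-- For two FBP solutions, the `L¹` distance of the densities at time `t` is
at most twice their `L¹` distance on `F⁻¹((ℓ_t ∨ m_t, ∞))`. -/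
theorem fbp_L1_distance_bound {d : ℕ} (F : Vec d → ℝ) (ρ : Vec d → Vec d → ℝ)
    (u₀ : Vec d → ℝ) (lam₀ : ℝ) (hA : AssumptionA d F ρ u₀ lam₀)
    (u v : Vec d → ℝ → ℝ) (ℓ m : ℝ → ℝ)
    (hu : IsFBPSolution d F ρ u₀ lam₀ u ℓ) (hv : IsFBPSolution d F ρ u₀ lam₀ v m) :
    ∀ t : ℝ, 0 < t →
      ∫ x, |u x t - v x t| ≤ 2 * ∫ x in F ⁻¹' Ioi (max (ℓ t) (m t)), |u x t - v x t| := by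
  intro t ht
  rcases le_total (ℓ t) (m t) with hℓm | hmℓ
  · exact hu.integral_abs_sub_le_of_le hA.F_cont.measurable hv ht hℓm
  · simpa only [max_comm (m t), abs_sub_comm (v _ t)] using
      hv.integral_abs_sub_le_of_le hA.F_cont.measurable hu ht hmℓ
end
end

section
/- Under Assumption A, let (u,ℓ) be a solution of the free boundary problem (FBP). Then there do not exist times 0 ≤ s < t such that ℓ_θ ≤ ℓ_s for all θ ∈ [0,t]. Equivalently, for every 0 ≤ s < t one has sup_{θ ∈ [0,t]} ℓ_θ > ℓ_s. -/
/-!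
If the boundary stayed at most `ℓ s` on `[s, t]` with `s > 0`, every point above `ℓ s` would stay
in the domain, so its density would be nondecreasing on `[s, t]` and would grow at least at the
rate at which the kernel sends the population of `{F > ℓ s}` at time `s` back into `{F > ℓ s}`.
At time `s` the whole mass lies in `{F > ℓ s}`, so this rate is positive and the mass above `ℓ s`
would exceed `1` at time `t`.

For `s = 0` the mass need not lie above `λ₀` at positive times. But the boundary starts at `λ₀`
and is right-continuous, so the mass below `λ₀` at time `θ` was born after time `0`; as births
occur at total rate at most `1`, it is at most `θ`. Since level sets of `F` are null, the mass
above `λ₀` is therefore `1` at positive times as long as the boundary stays at most `λ₀`, and the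
first argument applies. Bounding the births
uses Tonelli in `(x, t)`, for which `u` is replaced by a jointly measurable majorant built from
its values at countably many times.
-/

open MeasureTheory Set Filter Topology

noncomputable section

open scoped ENNReal

def rightGrid (n : ℕ) (σ : ℝ) : ℝ := (⌊σ * (n + 1)⌋₊ + 1) / (n + 1)

lemma rightGrid_pos (n : ℕ) (σ : ℝ) : 0 < rightGrid n σ := by
  unfold rightGrid; positivity

lemma measurable_rightGrid (n : ℕ) : Measurable (rightGrid n) := by
  unfold rightGrid
  fun_prop

lemma countable_range_rightGrid (n : ℕ) : (range (rightGrid n)).Countable := by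
  refine (countable_range fun k : ℕ => ((k : ℝ) + 1) / (n + 1)).mono ?_
  rintro _ ⟨σ, rfl⟩
  exact ⟨_, rfl⟩

lemma tendsto_rightGrid {σ : ℝ} (hσ : 0 ≤ σ) :
    Tendsto (rightGrid · σ) atTop (𝓝 σ) := by
  have hupper : Tendsto (fun n : ℕ => σ + 1 / ((n : ℝ) + 1)) atTop (𝓝 σ) := by
    simpa using (tendsto_const_nhds (x := σ)).add tendsto_one_div_add_atTop_nhds_zero_nat
  refine tendsto_of_tendsto_of_tendsto_of_le_of_le tendsto_const_nhds hupper (fun n => ?_)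
    (fun n => ?_)
  · have := Nat.lt_floor_add_one (σ * (n + 1))
    rw [rightGrid, le_div_iff₀ (by positivity)]
    linarith
  · have := Nat.floor_le (a := σ * (n + 1)) (by positivity)
    rw [rightGrid, div_le_iff₀ (by positivity), add_mul, one_div_mul_cancel (by positivity)]
    linarith

lemma measurable_comp_of_countable_range {α β γ δ : Type*} [MeasurableSpace α]
    [MeasurableSpace β] [MeasurableSpace γ] [MeasurableSpace δ] [MeasurableSingletonClass δ]
    {g : β → δ} (hg : Measurable g) (hcr : (range g).Countable) {v : α → δ → γ}
    (hv : ∀ q ∈ range g, Measurable (v · q)) :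
    Measurable fun p : α × β => v p.1 (g p.2) := by
  have := hcr.to_subtype
  have hv' : Measurable fun p : α × range g => v p.1 p.2 :=
    measurable_from_prod_countable_left fun q => hv q q.2
  exact hv'.comp (measurable_fst.prodMk
    ((hg.comp measurable_snd).subtype_mk (h := fun p => mem_range_self p.2)))

lemma ofReal_integral_le_lintegral_ofReal {α : Type*} [MeasurableSpace α] {μ : Measure α}
    {f : α → ℝ} (hf : 0 ≤ᵐ[μ] f) :
    ENNReal.ofReal (∫ x, f x ∂μ) ≤ ∫⁻ x, ENNReal.ofReal (f x) ∂μ :=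
  calc ENNReal.ofReal (∫ x, f x ∂μ) ≤ ‖∫ x, f x ∂μ‖ₑ := ENNReal.ofReal_le_of_le_toReal
        (by rw [toReal_enorm]; exact le_abs_self _)
    _ ≤ ∫⁻ x, ‖f x‖ₑ ∂μ := enorm_integral_le_lintegral_enorm f
    _ = ∫⁻ x, ENNReal.ofReal (f x) ∂μ :=
        lintegral_congr_ae (hf.mono fun x hx => Real.enorm_of_nonneg hx)

lemma lintegral_lintegral_mul_swap {α β : Type*} [MeasurableSpace α] [MeasurableSpace β]
    {μ : Measure α} {ν : Measure β} [SFinite μ] [SFinite ν] {g : α → ℝ≥0∞} (hg : Measurable g)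
    {k : α → β → ℝ≥0∞} (hk : Measurable (Function.uncurry k)) :
    ∫⁻ x, ∫⁻ y, g y * k y x ∂μ ∂ν = ∫⁻ y, g y * ∫⁻ x, k y x ∂ν ∂μ := by
  rw [lintegral_lintegral_swap ((hg.comp measurable_snd).mul
    (hk.comp measurable_swap)).aemeasurable]
  exact lintegral_congr fun y => lintegral_const_mul _ (hk.comp measurable_prodMk_left)

lemma setLIntegral_eq_zero_of_setLIntegral_mul_eq_zero {α : Type*} [MeasurableSpace α]
    {μ : Measure α} {s : Set α} (hs : MeasurableSet s) {g K : α → ℝ≥0∞} (hg : Measurable g)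
    (hK : Measurable K) (hKpos : ∀ y ∈ s, K y ≠ 0) (h : ∫⁻ y in s, g y * K y ∂μ = 0) :
    ∫⁻ y in s, g y ∂μ = 0 := by
  have hprod := (lintegral_eq_zero_iff (hg.mul hK)).1 h
  rw [lintegral_eq_zero_iff hg]
  filter_upwards [hprod, ae_restrict_mem hs] with y hy hys
  exact (mul_eq_zero.1 hy).resolve_right (hKpos y hys)

/-- As `rightGrid n σ` takes countably many values, `gridLiminf u` is jointly measurable as soon
as every time slice of `u` is; where `u x ·` is continuous it recovers `ENNReal.ofReal ∘ u x`. -/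
def gridLiminf {α : Type*} (u : α → ℝ → ℝ) (p : α × ℝ) : ℝ≥0∞ :=
  liminf (fun n => ENNReal.ofReal (u p.1 (rightGrid n p.2))) atTop

lemma measurable_gridLiminf {α : Type*} [MeasurableSpace α] {u : α → ℝ → ℝ}
    (hu : ∀ q, 0 < q → Measurable (u · q)) : Measurable (gridLiminf u) :=
  Measurable.liminf fun n => measurable_comp_of_countable_range (measurable_rightGrid n)
    (countable_range_rightGrid n) (v := fun x q => ENNReal.ofReal (u x q))
    fun _ ⟨σ, hσ⟩ => hσ ▸ (hu _ (rightGrid_pos n σ)).ennreal_ofReal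

lemma lintegral_gridLiminf_le_one {α : Type*} [MeasurableSpace α] {μ : Measure α}
    {u : α → ℝ → ℝ} (hu : ∀ q, 0 < q → Measurable (u · q))
    (hmass : ∀ q, 0 < q → ∫⁻ x, ENNReal.ofReal (u x q) ∂μ ≤ 1) (σ : ℝ) :
    ∫⁻ x, gridLiminf u (x, σ) ∂μ ≤ 1 :=
  calc ∫⁻ x, gridLiminf u (x, σ) ∂μ
      ≤ liminf (fun n => ∫⁻ x, ENNReal.ofReal (u x (rightGrid n σ)) ∂μ) atTop :=
        lintegral_liminf_le fun n => (hu _ (rightGrid_pos n σ)).ennreal_ofReal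
    _ ≤ liminf (fun _ => 1) atTop :=
        liminf_le_liminf (Eventually.of_forall fun n => hmass _ (rightGrid_pos n σ))
    _ = 1 := liminf_const 1

namespace AssumptionA

variable {d : ℕ} {F : Vec d → ℝ} {ρ : Vec d → Vec d → ℝ} {u₀ : Vec d → ℝ} {lam₀ : ℝ}

lemma integrable_mul_kernel (hA : AssumptionA d F ρ u₀ lam₀) {v : Vec d → ℝ}
    (hv : Measurable v) {C : ℝ} (hC : ∀ y, |v y| ≤ C) (x : Vec d) :
    Integrable fun y => v y * ρ y x := by
  obtain ⟨ρt, c, -, hρt, -, hdom⟩ := hA.ρ_dom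
  refine ((hρt.comp_sub_left x).const_mul (C * c)).mono'
    (hv.mul (hA.ρ_meas.comp (measurable_id.prodMk measurable_const))).aestronglyMeasurable
    (Eventually.of_forall fun y => ?_)
  rw [norm_mul, Real.norm_eq_abs, Real.norm_of_nonneg (hA.ρ_nonneg y x), mul_assoc]
  exact mul_le_mul (hC y) (hdom y x) (hA.ρ_nonneg y x) ((abs_nonneg _).trans (hC y))

lemma lintegral_ofReal_kernel (hA : AssumptionA d F ρ u₀ lam₀) (y : Vec d) :
    ∫⁻ x, ENNReal.ofReal (ρ y x) = 1 := by
  rw [← ofReal_integral_eq_lintegral_ofReal (hA.ρ_int y)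
    (Eventually.of_forall (hA.ρ_nonneg y)), hA.ρ_prob y, ENNReal.ofReal_one]

lemma setLIntegral_ofReal_kernel_pos (hA : AssumptionA d F ρ u₀ lam₀) {a : ℝ} {y : Vec d}
    (hy : a < F y) : 0 < ∫⁻ x in F ⁻¹' Ioi a, ENNReal.ofReal (ρ y x) :=
  (ENNReal.ofReal_pos.2 (hA.ρ_push_pos a y hy)).trans_le
    (ofReal_integral_le_lintegral_ofReal (Eventually.of_forall (hA.ρ_nonneg y)))

end AssumptionA

def gridFlux {d : ℕ} (ρ : Vec d → Vec d → ℝ) (u : Vec d → ℝ → ℝ) (p : Vec d × ℝ) : ℝ≥0∞ :=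
  ∫⁻ y, gridLiminf u (y, p.2) * ENNReal.ofReal (ρ y p.1)

namespace IsFBPSolution

variable {d : ℕ} {F : Vec d → ℝ} {ρ : Vec d → Vec d → ℝ} {u₀ : Vec d → ℝ} {lam₀ : ℝ}
  {u : Vec d → ℝ → ℝ} {ℓ : ℝ → ℝ}

lemma lintegral_ofReal_eq_one (hsol : IsFBPSolution d F ρ u₀ lam₀ u ℓ) {θ : ℝ} (hθ : 0 < θ) :
    ∫⁻ x, ENNReal.ofReal (u x θ) = 1 := by
  have hint : Integrable fun x => u x θ := by
    by_contra h
    simpa [integral_undef h] using hsol.mass θ hθ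
  rw [← ofReal_integral_eq_lintegral_ofReal hint
    (Eventually.of_forall fun x => hsol.u_nonneg x θ hθ.le), hsol.mass θ hθ, ENNReal.ofReal_one]

lemma setLIntegral_above_eq_one (hsol : IsFBPSolution d F ρ u₀ lam₀ u ℓ) {θ : ℝ}
    (hθ : 0 < θ) : ∫⁻ x in F ⁻¹' Ioi (ℓ θ), ENNReal.ofReal (u x θ) = 1 := by
  rw [setLIntegral_eq_of_support_subset, hsol.lintegral_ofReal_eq_one hθ]
  intro x hx
  by_contra hxE
  exact hx (by simp [hsol.vanish x θ hθ (not_lt.1 hxE)])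

lemma flux_nonneg (hA : AssumptionA d F ρ u₀ lam₀) (hsol : IsFBPSolution d F ρ u₀ lam₀ u ℓ)
    (x : Vec d) {σ : ℝ} (hσ : 0 ≤ σ) : 0 ≤ ∫ y, u y σ * ρ y x :=
  integral_nonneg fun y => mul_nonneg (hsol.u_nonneg y σ hσ) (hA.ρ_nonneg y x)

lemma integrable_flux (hA : AssumptionA d F ρ u₀ lam₀) (hsol : IsFBPSolution d F ρ u₀ lam₀ u ℓ)
    (x : Vec d) {σ T : ℝ} (hσ : σ ∈ Icc 0 T) {C : ℝ} (hC : ∀ y, ∀ t ∈ Icc 0 T, u y t ≤ C) :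
    Integrable fun y => u y σ * ρ y x :=
  hA.integrable_mul_kernel (hsol.u_meas σ hσ.1) (fun y => by
    rw [abs_of_nonneg (hsol.u_nonneg y σ hσ.1)]; exact hC y σ hσ) x

lemma add_mul_le_of_le_flux (hsol : IsFBPSolution d F ρ u₀ lam₀ u ℓ) {x : Vec d} {a b C : ℝ}
    (ha : 0 < a) (hab : a ≤ b) (hcov : ∀ σ ∈ Icc a b, ℓ σ < F x)
    (hC : ∀ σ ∈ Icc a b, C ≤ ∫ y, u y σ * ρ y x) : u x a + C * (b - a) ≤ u x b := by
  have hderiv : ∀ σ ∈ Icc a b, HasDerivAt (u x ·) (∫ y, u y σ * ρ y x) σ := fun σ hσ =>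
    hsol.pde x σ (ha.trans_le hσ.1) (hcov σ hσ)
  have := (convex_Icc a b).mul_sub_le_image_sub_of_le_deriv
    (fun σ hσ => (hderiv σ hσ).continuousAt.continuousWithinAt)
    (fun σ hσ => (hderiv σ (interior_subset hσ)).differentiableAt.differentiableWithinAt)
    (fun σ hσ => (hderiv σ (interior_subset hσ)).deriv ▸ hC σ (interior_subset hσ))
    a (left_mem_Icc.2 hab) b (right_mem_Icc.2 hab) hab
  linarith

lemma le_of_boundary_lt (hA : AssumptionA d F ρ u₀ lam₀)
    (hsol : IsFBPSolution d F ρ u₀ lam₀ u ℓ) {x : Vec d} {a b : ℝ} (ha : 0 < a) (hab : a ≤ b)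
    (hcov : ∀ σ ∈ Icc a b, ℓ σ < F x) : u x a ≤ u x b := by
  simpa using hsol.add_mul_le_of_le_flux ha hab hcov fun σ hσ =>
    hsol.flux_nonneg hA x (ha.le.trans hσ.1)

lemma setIntegral_above_le_flux (hA : AssumptionA d F ρ u₀ lam₀)
    (hsol : IsFBPSolution d F ρ u₀ lam₀ u ℓ) {a σ Λ : ℝ} (ha : 0 < a) (haσ : a ≤ σ)
    (hΛ : ∀ ς ∈ Icc a σ, ℓ ς ≤ Λ) (x : Vec d) :
    ∫ y in F ⁻¹' Ioi Λ, u y a * ρ y x ≤ ∫ y, u y σ * ρ y x := by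
  obtain ⟨C, hC⟩ := hsol.u_bdd σ (ha.trans_le haσ)
  have hint := fun t (ht : t ∈ Icc 0 σ) => hsol.integrable_flux hA x ht hC
  calc ∫ y in F ⁻¹' Ioi Λ, u y a * ρ y x ≤ ∫ y in F ⁻¹' Ioi Λ, u y σ * ρ y x :=
        setIntegral_mono_on (hint a ⟨ha.le, haσ⟩).integrableOn
          (hint σ ⟨(ha.trans_le haσ).le, le_rfl⟩).integrableOn
          (hA.F_cont.measurable measurableSet_Ioi) fun y hy =>
            mul_le_mul_of_nonneg_right (hsol.le_of_boundary_lt hA ha haσ fun ς hς =>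
              (hΛ ς hς).trans_lt hy) (hA.ρ_nonneg y x)
    _ ≤ ∫ y, u y σ * ρ y x :=
        setIntegral_le_integral (hint σ ⟨(ha.trans_le haσ).le, le_rfl⟩)
          (Eventually.of_forall fun y =>
            mul_nonneg (hsol.u_nonneg y σ (ha.trans_le haσ).le) (hA.ρ_nonneg y x))

lemma ofReal_add_mul_le (hA : AssumptionA d F ρ u₀ lam₀)
    (hsol : IsFBPSolution d F ρ u₀ lam₀ u ℓ) {a b Λ : ℝ} (ha : 0 < a) (hab : a ≤ b)
    (hΛ : ∀ σ ∈ Icc a b, ℓ σ ≤ Λ) {x : Vec d} (hx : Λ < F x) :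
    ENNReal.ofReal (u x a) + ENNReal.ofReal (b - a) *
      ∫⁻ y in F ⁻¹' Ioi Λ, ENNReal.ofReal (u y a) * ENNReal.ofReal (ρ y x)
      ≤ ENNReal.ofReal (u x b) := by
  obtain ⟨C, hC⟩ := hsol.u_bdd a ha
  have hreal := hsol.add_mul_le_of_le_flux ha hab (fun σ hσ => (hΛ σ hσ).trans_lt hx) fun σ hσ =>
    hsol.setIntegral_above_le_flux hA ha hσ.1 (fun ς hς => hΛ ς ⟨hς.1, hς.2.trans hσ.2⟩) x
  have hφ : ENNReal.ofReal (∫ y in F ⁻¹' Ioi Λ, u y a * ρ y x)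
      = ∫⁻ y in F ⁻¹' Ioi Λ, ENNReal.ofReal (u y a) * ENNReal.ofReal (ρ y x) := by
    rw [ofReal_integral_eq_lintegral_ofReal
      (hsol.integrable_flux hA x ⟨ha.le, le_rfl⟩ hC).integrableOn
      (Eventually.of_forall fun y => mul_nonneg (hsol.u_nonneg y a ha.le) (hA.ρ_nonneg y x))]
    exact lintegral_congr fun y => ENNReal.ofReal_mul (hsol.u_nonneg y a ha.le)
  have hφ0 : 0 ≤ ∫ y in F ⁻¹' Ioi Λ, u y a * ρ y x :=
    setIntegral_nonneg (hA.F_cont.measurable measurableSet_Ioi) fun y _ =>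
      mul_nonneg (hsol.u_nonneg y a ha.le) (hA.ρ_nonneg y x)
  rw [← hφ, mul_comm, ← ENNReal.ofReal_mul hφ0,
    ← ENNReal.ofReal_add (hsol.u_nonneg x a ha.le) (mul_nonneg hφ0 (sub_nonneg.2 hab))]
  exact ENNReal.ofReal_le_ofReal hreal

lemma exists_boundary_gt_of_mass_above (hA : AssumptionA d F ρ u₀ lam₀)
    (hsol : IsFBPSolution d F ρ u₀ lam₀ u ℓ) {a b Λ : ℝ} (ha : 0 < a) (hab : a < b)
    (hm : 1 ≤ ∫⁻ x in F ⁻¹' Ioi Λ, ENNReal.ofReal (u x a)) : ∃ σ ∈ Icc a b, Λ < ℓ σ := by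
  by_contra! hΛ
  set E := F ⁻¹' Ioi Λ
  have hE : MeasurableSet E := hA.F_cont.measurable measurableSet_Ioi
  have hua : Measurable fun y => ENNReal.ofReal (u y a) := (hsol.u_meas a ha.le).ennreal_ofReal
  have hk : Measurable (Function.uncurry fun y x => ENNReal.ofReal (ρ y x)) :=
    hA.ρ_meas.ennreal_ofReal
  have hcm : Measurable fun x => ∫⁻ y in E, ENNReal.ofReal (u y a) * ENNReal.ofReal (ρ y x) :=
    ((hua.comp measurable_snd).mul (hk.comp measurable_swap)).lintegral_prod_right'
  set cross := ∫⁻ x in E, ∫⁻ y in E, ENNReal.ofReal (u y a) * ENNReal.ofReal (ρ y x)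
    with hcross_def
  have hcross : cross ≠ 0 := by
    rw [hcross_def, lintegral_lintegral_mul_swap hua hk]
    intro h
    have := setLIntegral_eq_zero_of_setLIntegral_mul_eq_zero hE hua
      (hk.lintegral_prod_right) (fun y hy => (hA.setLIntegral_ofReal_kernel_pos hy).ne') h
    simp [this] at hm
  have hgrowth : (∫⁻ x in E, ENNReal.ofReal (u x a)) + ENNReal.ofReal (b - a) * cross
      ≤ ∫⁻ x in E, ENNReal.ofReal (u x b) := by
    rw [hcross_def, ← lintegral_const_mul _ hcm,
      ← lintegral_add_left hua]
    exact setLIntegral_mono (hsol.u_meas b (ha.trans hab).le).ennreal_ofReal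
      fun x hx => hsol.ofReal_add_mul_le hA ha hab.le hΛ hx
  have hb : ∫⁻ x in E, ENNReal.ofReal (u x b) ≤ 1 :=
    (setLIntegral_le_lintegral _ _).trans_eq (hsol.lintegral_ofReal_eq_one (ha.trans hab))
  have hpos : ENNReal.ofReal (b - a) * cross ≠ 0 :=
    mul_ne_zero (ENNReal.ofReal_pos.2 (sub_pos.2 hab)).ne' hcross
  have : 1 + ENNReal.ofReal (b - a) * cross ≤ 1 + 0 :=
    calc _ ≤ (∫⁻ x in E, ENNReal.ofReal (u x a)) + ENNReal.ofReal (b - a) * cross :=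
          add_le_add_left hm _
      _ ≤ 1 + 0 := by rw [add_zero]; exact hgrowth.trans hb
  exact hpos (nonpos_iff_eq_zero.1 (ENNReal.le_of_add_le_add_left ENNReal.one_ne_top this))

lemma exists_boundary_gt (hA : AssumptionA d F ρ u₀ lam₀)
    (hsol : IsFBPSolution d F ρ u₀ lam₀ u ℓ) {s t : ℝ} (hs : 0 < s) (hst : s < t) :
    ∃ σ ∈ Icc s t, ℓ s < ℓ σ :=
  hsol.exists_boundary_gt_of_mass_above hA hs hst (hsol.setLIntegral_above_eq_one hs).ge

lemma ofReal_le_gridLiminf (hsol : IsFBPSolution d F ρ u₀ lam₀ u ℓ) {x : Vec d} {σ : ℝ}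
    (hσ : 0 < σ) : ENNReal.ofReal (u x σ) ≤ gridLiminf u (x, σ) := by
  by_cases h : ℓ σ < F x
  · exact (ENNReal.continuous_ofReal.continuousAt.tendsto.comp
      ((hsol.pde x σ hσ h).continuousAt.tendsto.comp (tendsto_rightGrid hσ.le))).liminf_eq.ge
  · simp [hsol.vanish x σ hσ (not_lt.1 h)]

lemma measurable_gridFlux (hA : AssumptionA d F ρ u₀ lam₀)
    (hsol : IsFBPSolution d F ρ u₀ lam₀ u ℓ) : Measurable (gridFlux ρ u) :=
  (((measurable_gridLiminf fun q hq => hsol.u_meas q hq.le).comp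
    (measurable_snd.prodMk (measurable_snd.comp measurable_fst))).mul
    (hA.ρ_meas.ennreal_ofReal.comp
      (measurable_snd.prodMk (measurable_fst.comp measurable_fst)))).lintegral_prod_right'

lemma ofReal_flux_le_gridFlux (hA : AssumptionA d F ρ u₀ lam₀)
    (hsol : IsFBPSolution d F ρ u₀ lam₀ u ℓ) {σ : ℝ} (hσ : 0 < σ) (x : Vec d) :
    ENNReal.ofReal (∫ y, u y σ * ρ y x) ≤ gridFlux ρ u (x, σ) :=
  (ofReal_integral_le_lintegral_ofReal (Eventually.of_forall fun y =>
    mul_nonneg (hsol.u_nonneg y σ hσ.le) (hA.ρ_nonneg y x))).trans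
    (lintegral_mono fun y => by
      rw [ENNReal.ofReal_mul (hsol.u_nonneg y σ hσ.le)]
      exact mul_le_mul_left (hsol.ofReal_le_gridLiminf hσ) _)

lemma lintegral_gridFlux_le_one (hA : AssumptionA d F ρ u₀ lam₀)
    (hsol : IsFBPSolution d F ρ u₀ lam₀ u ℓ) (σ : ℝ) : ∫⁻ x, gridFlux ρ u (x, σ) ≤ 1 := by
  have hu : ∀ q, 0 < q → Measurable (u · q) := fun q hq => hsol.u_meas q hq.le
  change ∫⁻ x, ∫⁻ y, gridLiminf u (y, σ) * ENNReal.ofReal (ρ y x) ≤ 1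
  rw [lintegral_lintegral_mul_swap (g := fun y => gridLiminf u (y, σ))
    ((measurable_gridLiminf hu).comp (measurable_id.prodMk measurable_const))
    hA.ρ_meas.ennreal_ofReal]
  simp only [hA.lintegral_ofReal_kernel, mul_one]
  exact lintegral_gridLiminf_le_one hu (fun q hq => (hsol.lintegral_ofReal_eq_one hq).le) σ

lemma ofReal_le_add_setLIntegral_gridFlux (hA : AssumptionA d F ρ u₀ lam₀)
    (hsol : IsFBPSolution d F ρ u₀ lam₀ u ℓ) {x : Vec d} {τ θ : ℝ} (hτ : 0 < τ)
    (hτθ : τ ≤ θ) (hcov : ∀ σ ∈ Icc τ θ, ℓ σ < F x) :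
    ENNReal.ofReal (u x θ) ≤ ENNReal.ofReal (u x τ) + ∫⁻ σ in Ioc τ θ, gridFlux ρ u (x, σ) := by
  have hftc : ∫ σ in Ioc τ θ, (∫ y, u y σ * ρ y x) = u x θ - u x τ := by
    rw [← intervalIntegral.integral_of_le hτθ]
    refine intervalIntegral.integral_eq_sub_of_hasDerivAt (fun σ hσ => ?_)
      (ContinuousOn.intervalIntegrable ((hsol.pde_cont x).mono fun σ hσ => ?_))
    · rw [uIcc_of_le hτθ] at hσ
      exact hsol.pde x σ (hτ.trans_le hσ.1) (hcov σ hσ)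
    · rw [uIcc_of_le hτθ] at hσ
      exact ⟨hτ.trans_le hσ.1, hcov σ hσ⟩
  calc ENNReal.ofReal (u x θ)
      = ENNReal.ofReal (u x τ + ∫ σ in Ioc τ θ, (∫ y, u y σ * ρ y x)) := by
        rw [hftc, add_sub_cancel]
    _ ≤ ENNReal.ofReal (u x τ) + ENNReal.ofReal (∫ σ in Ioc τ θ, (∫ y, u y σ * ρ y x)) :=
        ENNReal.ofReal_add_le
    _ ≤ ENNReal.ofReal (u x τ) + ∫⁻ σ in Ioc τ θ, ENNReal.ofReal (∫ y, u y σ * ρ y x) := by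
        gcongr
        exact ofReal_integral_le_lintegral_ofReal ((ae_restrict_iff' measurableSet_Ioc).2
          (Eventually.of_forall fun σ hσ => hsol.flux_nonneg hA x (hτ.trans hσ.1).le))
    _ ≤ ENNReal.ofReal (u x τ) + ∫⁻ σ in Ioc τ θ, gridFlux ρ u (x, σ) :=
        add_le_add_right (setLIntegral_mono' measurableSet_Ioc fun σ hσ =>
          hsol.ofReal_flux_le_gridFlux hA (hτ.trans hσ.1) x) _

/-- `τ` is the last time in `(0, θ]` at which `x` lay in `{F ≤ ℓ}`. -/
lemma exists_last_vanishing_time (hA : AssumptionA d F ρ u₀ lam₀)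
    (hsol : IsFBPSolution d F ρ u₀ lam₀ u ℓ) {x : Vec d} {θ : ℝ} (hθ : 0 < θ)
    (hx : F x < lam₀) :
    ∃ τ ∈ Ioc 0 θ, u x τ = 0 ∧ (τ = θ ∨ ∀ σ ∈ Icc τ θ, ℓ σ < F x) := by
  set A := {σ | σ ∈ Ioc 0 θ ∧ F x ≤ ℓ σ}
  obtain ⟨σ₀, hσ₀⟩ : A.Nonempty := by
    have hrc : Tendsto ℓ (𝓝[>] 0) (𝓝 lam₀) := hsol.init_ℓ ▸
      (hsol.ℓ_rc 0 le_rfl).tendsto.mono_left (nhdsWithin_mono _ Ioi_subset_Ici_self)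
    obtain ⟨σ, hσℓ, hσ⟩ := ((hrc.eventually (Ioi_mem_nhds hx)).and
      (Ioc_mem_nhdsGT_of_mem ⟨le_rfl, hθ⟩)).exists
    exact ⟨σ, hσ, le_of_lt hσℓ⟩
  have hbdd : BddAbove A := ⟨θ, fun σ hσ => hσ.1.2⟩
  set τ := sSup A
  have hτ : τ ∈ Ioc 0 θ :=
    ⟨hσ₀.1.1.trans_le (le_csSup hbdd hσ₀), csSup_le ⟨σ₀, hσ₀⟩ fun σ hσ => hσ.1.2⟩
  have hafter : ∀ σ ∈ Ioc τ θ, ℓ σ < F x := fun σ hσ => not_le.1 fun h =>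
    (le_csSup hbdd ⟨⟨hτ.1.trans hσ.1, hσ.2⟩, h⟩).not_gt hσ.1
  refine ⟨τ, hτ, ?_⟩
  by_cases hτx : F x ≤ ℓ τ
  · refine ⟨hsol.vanish x τ hτ.1 hτx, Or.inl (hτ.2.eq_or_lt.resolve_right fun hτθ => ?_)⟩
    obtain ⟨σ, hσ, hlt⟩ := hsol.exists_boundary_gt hA hτ.1 hτθ
    rcases hσ.1.eq_or_lt with rfl | h
    · exact lt_irrefl _ hlt
    · exact (hafter σ ⟨h, hσ.2⟩).not_ge (hτx.trans hlt.le)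
  · replace hτx := not_le.1 hτx
    refine ⟨?_, Or.inr fun σ hσ => hσ.1.eq_or_lt.elim (fun h => h ▸ hτx)
      fun h => hafter σ ⟨h, hσ.2⟩⟩
    have hmem := (hsol.pde x τ hτ.1 hτx).continuousAt.continuousWithinAt.mem_closure_image
      (csSup_mem_closure ⟨σ₀, hσ₀⟩ hbdd)
    have hzero : (u x ·) '' A ⊆ {0} := by
      rintro _ ⟨σ, hσ, rfl⟩
      exact hsol.vanish x σ hσ.1.1 hσ.2
    simpa using closure_mono hzero hmem

lemma ofReal_le_setLIntegral_gridFlux (hA : AssumptionA d F ρ u₀ lam₀)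
    (hsol : IsFBPSolution d F ρ u₀ lam₀ u ℓ) {x : Vec d} {θ : ℝ} (hθ : 0 < θ)
    (hx : F x < lam₀) : ENNReal.ofReal (u x θ) ≤ ∫⁻ σ in Ioc 0 θ, gridFlux ρ u (x, σ) := by
  obtain ⟨τ, hτ, huτ, rfl | hcov⟩ := hsol.exists_last_vanishing_time hA hθ hx
  · simp [huτ]
  · calc ENNReal.ofReal (u x θ)
        ≤ ENNReal.ofReal (u x τ) + ∫⁻ σ in Ioc τ θ, gridFlux ρ u (x, σ) :=
          hsol.ofReal_le_add_setLIntegral_gridFlux hA hτ.1 hτ.2 hcov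
      _ ≤ ∫⁻ σ in Ioc 0 θ, gridFlux ρ u (x, σ) := by
          rw [huτ, ENNReal.ofReal_zero, zero_add]
          exact lintegral_mono_set (Ioc_subset_Ioc_left hτ.1.le)

/-- Mass below the initial boundary can only come from births, at total rate at most `1`. -/
lemma setLIntegral_below_init_le (hA : AssumptionA d F ρ u₀ lam₀)
    (hsol : IsFBPSolution d F ρ u₀ lam₀ u ℓ) {θ : ℝ} (hθ : 0 < θ) :
    ∫⁻ x in F ⁻¹' Iio lam₀, ENNReal.ofReal (u x θ) ≤ ENNReal.ofReal θ :=
  calc ∫⁻ x in F ⁻¹' Iio lam₀, ENNReal.ofReal (u x θ)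
      ≤ ∫⁻ x in F ⁻¹' Iio lam₀, ∫⁻ σ in Ioc 0 θ, gridFlux ρ u (x, σ) :=
        setLIntegral_mono' (hA.F_cont.measurable measurableSet_Iio) fun _ hx =>
          hsol.ofReal_le_setLIntegral_gridFlux hA hθ hx
    _ = ∫⁻ σ in Ioc 0 θ, ∫⁻ x in F ⁻¹' Iio lam₀, gridFlux ρ u (x, σ) :=
        lintegral_lintegral_swap (hsol.measurable_gridFlux hA).aemeasurable
    _ ≤ ∫⁻ _ in Ioc 0 θ, 1 := lintegral_mono fun σ =>
        (setLIntegral_le_lintegral _ _).trans (hsol.lintegral_gridFlux_le_one hA σ)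
    _ = ENNReal.ofReal θ := by simp

lemma one_le_setLIntegral_above_init (hA : AssumptionA d F ρ u₀ lam₀)
    (hsol : IsFBPSolution d F ρ u₀ lam₀ u ℓ) {θ : ℝ} (hθ : 0 < θ)
    (hℓ : ∀ σ ∈ Ioc 0 θ, ℓ σ ≤ lam₀) :
    1 ≤ ∫⁻ x in F ⁻¹' Ioi lam₀, ENNReal.ofReal (u x θ) := by
  refine ENNReal.le_of_forall_pos_le_add fun ε hε _ => ?_
  set η := min (ε : ℝ) θ
  have hη : 0 < η := lt_min hε hθ
  have hcompl : (F ⁻¹' Ioi lam₀)ᶜ ⊆ F ⁻¹' Iio lam₀ ∪ F ⁻¹' {lam₀} := fun x (hx : ¬ lam₀ < F x) =>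
    (not_lt.1 hx).lt_or_eq
  calc 1 = ∫⁻ x, ENNReal.ofReal (u x η) := (hsol.lintegral_ofReal_eq_one hη).symm
    _ = (∫⁻ x in F ⁻¹' Ioi lam₀, ENNReal.ofReal (u x η))
          + ∫⁻ x in (F ⁻¹' Ioi lam₀)ᶜ, ENNReal.ofReal (u x η) :=
        (lintegral_add_compl _ (hA.F_cont.measurable measurableSet_Ioi)).symm
    _ ≤ (∫⁻ x in F ⁻¹' Ioi lam₀, ENNReal.ofReal (u x θ))
          + ((∫⁻ x in F ⁻¹' Iio lam₀, ENNReal.ofReal (u x η))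
            + ∫⁻ x in F ⁻¹' {lam₀}, ENNReal.ofReal (u x η)) :=
        add_le_add (setLIntegral_mono (hsol.u_meas θ hθ.le).ennreal_ofReal fun x hx =>
          ENNReal.ofReal_le_ofReal (hsol.le_of_boundary_lt hA hη (min_le_right _ _)
            fun σ hσ => (hℓ σ ⟨hη.trans_le hσ.1, hσ.2⟩).trans_lt hx))
          ((lintegral_mono_set hcompl).trans (lintegral_union_le _ _ _))
    _ ≤ (∫⁻ x in F ⁻¹' Ioi lam₀, ENNReal.ofReal (u x θ)) + ε := by
        rw [setLIntegral_measure_zero _ _ (hA.F_level_null lam₀), add_zero]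
        refine add_le_add_right ((hsol.setLIntegral_below_init_le hA hη).trans ?_) _
        exact (ENNReal.ofReal_le_ofReal (min_le_left _ _)).trans_eq ENNReal.ofReal_coe_nnreal

lemma exists_boundary_gt_init (hA : AssumptionA d F ρ u₀ lam₀)
    (hsol : IsFBPSolution d F ρ u₀ lam₀ u ℓ) {t : ℝ} (ht : 0 < t) :
    ∃ σ ∈ Ioc 0 t, lam₀ < ℓ σ := by
  by_contra! hℓ
  obtain ⟨σ, hσ, hlt⟩ := hsol.exists_boundary_gt_of_mass_above hA (half_pos ht)
    (half_lt_self ht) (hsol.one_le_setLIntegral_above_init hA (half_pos ht)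
      fun σ hσ => hℓ σ ⟨hσ.1, hσ.2.trans (half_le_self ht.le)⟩)
  exact (hℓ σ ⟨(half_pos ht).trans_le hσ.1, hσ.2⟩).not_gt hlt

end IsFBPSolution

/-- There are no times `0 ≤ s < t` such that `ℓ θ ≤ ℓ s` for all `θ ∈ [0, t]`;
equivalently, for all `0 ≤ s < t` one has `sup_{θ ∈ [0,t]} ℓ θ > ℓ s`. -/
theorem fbp_boundary_strictly_advances {d : ℕ} (F : Vec d → ℝ) (ρ : Vec d → Vec d → ℝ)
    (u₀ : Vec d → ℝ) (lam₀ : ℝ) (hA : AssumptionA d F ρ u₀ lam₀)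
    (u : Vec d → ℝ → ℝ) (ℓ : ℝ → ℝ) (hsol : IsFBPSolution d F ρ u₀ lam₀ u ℓ) :
    (¬ ∃ s t : ℝ, 0 ≤ s ∧ s < t ∧ ∀ θ ∈ Icc (0:ℝ) t, ℓ θ ≤ ℓ s) ∧
    (∀ s t : ℝ, 0 ≤ s → s < t → ∃ θ ∈ Icc (0:ℝ) t, ℓ s < ℓ θ) := by
  have advances : ∀ s t : ℝ, 0 ≤ s → s < t → ∃ θ ∈ Icc (0:ℝ) t, ℓ s < ℓ θ := by
    intro s t hs hst
    rcases hs.eq_or_lt with rfl | hs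
    · obtain ⟨σ, hσ, hlt⟩ := hsol.exists_boundary_gt_init hA hst
      exact ⟨σ, ⟨hσ.1.le, hσ.2⟩, hsol.init_ℓ ▸ hlt⟩
    · obtain ⟨σ, hσ, hlt⟩ := hsol.exists_boundary_gt hA hs hst
      exact ⟨σ, ⟨hs.le.trans hσ.1, hσ.2⟩, hlt⟩
  refine ⟨fun ⟨s, t, hs, hst, hle⟩ => ?_, advances⟩
  obtain ⟨θ, hθ, hlt⟩ := advances s t hs hst
  exact (hle θ hθ).not_gt hlt
end
end
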